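/- arXiv:2007.04919 — 8 statements merged into one kernel-verified Lean document; each statement's English description precedes it below -/
import Mathlib

section
/- Let G be a finite group and p a prime. Then the sum over the conjugacy classes K of G of the p-part |K|_p of the class size satisfies Σ_K |K|_p ≥ |G|_p, with equality if and only if G is a p-group. -/
/-!
Write `n = |G|`. Every class size `|K|` divides `n`, so its `p'`-part divides that of `n`, whence
`|K| ≤ |K|_p · n_{p'}`. Summing over the classes and using the class equation gives
`n_p · n_{p'} = n ≤ (∑ |K|_p) · n_{p'}`. Equality in the sum forces equality in every term, and the
class of `1` then gives `n_{p'} = 1`; conversely, in a `p`-group every class size is a power of `p`.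
-/

namespace Nat

variable {p n d : ℕ}

theorem le_ordProj_mul_ordCompl_of_dvd (hn : n ≠ 0) (h : d ∣ n) :
    d ≤ ordProj[p] d * ordCompl[p] n :=
  calc d = ordProj[p] d * ordCompl[p] d := (ordProj_mul_ordCompl_eq_self d p).symm
    _ ≤ ordProj[p] d * ordCompl[p] n :=
      Nat.mul_le_mul_left _ (le_of_dvd (ordCompl_pos p hn) (ordCompl_dvd_ordCompl_of_dvd h p))

theorem ordProj_eq_self_of_dvd_prime_pow (hp : p.Prime) {k : ℕ} (h : d ∣ p ^ k) :
    ordProj[p] d = d := by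
  obtain ⟨j, -, rfl⟩ := (dvd_prime_pow hp).1 h
  rw [hp.factorization_pow, Finsupp.single_eq_same]

section Sum

variable {ι : Type*} {s : Finset ι} {f : ι → ℕ}

theorem sum_le_sum_ordProj_mul_ordCompl (hn : n ≠ 0) (hf : ∀ i ∈ s, f i ∣ n) :
    ∑ i ∈ s, f i ≤ (∑ i ∈ s, ordProj[p] (f i)) * ordCompl[p] n := by
  rw [Finset.sum_mul]
  exact Finset.sum_le_sum fun i hi ↦ le_ordProj_mul_ordCompl_of_dvd hn (hf i hi)

theorem ordProj_le_sum_ordProj_of_sum_eq (hn : n ≠ 0) (hf : ∀ i ∈ s, f i ∣ n)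
    (hsum : ∑ i ∈ s, f i = n) : ordProj[p] n ≤ ∑ i ∈ s, ordProj[p] (f i) := by
  refine le_of_mul_le_mul_right ?_ (ordCompl_pos p hn)
  calc ordProj[p] n * ordCompl[p] n = ∑ i ∈ s, f i := by rw [ordProj_mul_ordCompl_eq_self, hsum]
    _ ≤ (∑ i ∈ s, ordProj[p] (f i)) * ordCompl[p] n := sum_le_sum_ordProj_mul_ordCompl hn hf

theorem sum_ordProj_eq_ordProj_iff (hp : p.Prime) (hn : n ≠ 0) (hf : ∀ i ∈ s, f i ∣ n)
    (hsum : ∑ i ∈ s, f i = n) {i₀ : ι} (hi₀ : i₀ ∈ s) (hf₀ : f i₀ = 1) :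
    ∑ i ∈ s, ordProj[p] (f i) = ordProj[p] n ↔ ordProj[p] n = n := by
  constructor
  · intro heq
    have hle i (hi : i ∈ s) := le_ordProj_mul_ordCompl_of_dvd (p := p) hn (hf i hi)
    have hterms : ∀ i ∈ s, f i = ordProj[p] (f i) * ordCompl[p] n := by
      refine (Finset.sum_eq_sum_iff_of_le hle).1 ?_
      rw [← Finset.sum_mul, heq, ordProj_mul_ordCompl_eq_self, hsum]
    have hcompl : ordCompl[p] n = 1 := by simpa [hf₀] using (hterms i₀ hi₀).symm
    simpa [hcompl] using ordProj_mul_ordCompl_eq_self n p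
  · intro hself
    have hdvd : n ∣ ordProj[p] n := hself.symm.dvd
    rw [← Finset.sum_congr rfl fun i hi ↦
      (ordProj_eq_self_of_dvd_prime_pow hp ((hf i hi).trans hdvd)).symm, hsum, hself]

end Sum

end Nat

namespace ConjClasses

variable {G : Type*} [Group G]

theorem ncard_carrier_dvd_card [Finite G] (K : ConjClasses G) : K.carrier.ncard ∣ Nat.card G := by
  obtain ⟨g, rfl⟩ := K.exists_rep
  rw [← ConjAct.orbit_eq_carrier_conjClasses, ← MulAction.index_stabilizer]
  exact (MulAction.stabilizer (ConjAct G) g).index_dvd_card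

theorem ncard_carrier_one : (1 : ConjClasses G).carrier.ncard = 1 := by
  have : (1 : ConjClasses G).carrier = {1} := by
    ext a
    simp [one_eq_mk_one, mem_carrier_iff_mk_eq, mk_eq_mk_iff_isConj]
  rw [this, Set.ncard_singleton]

end ConjClasses

theorem isPGroup_iff_ordProj_card_eq {p : ℕ} (hp : p.Prime) {G : Type*} [Group G] [Finite G] :
    IsPGroup p G ↔ ordProj[p] (Nat.card G) = Nat.card G := by
  rw [isPGroup_iff_card_dvd_pow]
  exact ⟨fun ⟨_, h⟩ ↦ Nat.ordProj_eq_self_of_dvd_prime_pow hp h, fun h ↦ ⟨_, h.symm.dvd⟩⟩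

theorem stmt_0 (p : ℕ) (hp : p.Prime) (G : Type*) [Group G] [Finite G] :
    p ^ ((Nat.card G).factorization p) ≤
      ∑ᶠ K : ConjClasses G, p ^ ((K.carrier.ncard).factorization p) ∧
    ((∑ᶠ K : ConjClasses G, p ^ ((K.carrier.ncard).factorization p))
        = p ^ ((Nat.card G).factorization p) ↔ IsPGroup p G) := by
  classical
  cases nonempty_fintype G
  have hG : Nat.card G ≠ 0 := Nat.card_pos.ne'
  have hdvd : ∀ K ∈ (Finset.univ : Finset (ConjClasses G)), K.carrier.ncard ∣ Nat.card G :=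
    fun K _ ↦ K.ncard_carrier_dvd_card
  have hsum : ∑ K : ConjClasses G, K.carrier.ncard = Nat.card G := by
    rw [← Group.sum_card_conj_classes_eq_card G, finsum_eq_sum_of_fintype]
  rw [finsum_eq_sum_of_fintype, isPGroup_iff_ordProj_card_eq hp]
  exact ⟨Nat.ordProj_le_sum_ordProj_of_sum_eq hG hdvd hsum,
    Nat.sum_ordProj_eq_ordProj_iff hp hG hdvd hsum (Finset.mem_univ 1) ConjClasses.ncard_carrier_one⟩
end

section
/- Let p be a prime, D a finite abelian p-group, and T a finite group of automorphisms of D whose order is coprime to p. If x ∈ D has order p^i and there exist t ∈ T and k ∈ ℤ with t(x) = x^{1+kp}, then x^{1+kp} = x (equivalently p^{i-1} divides k). -/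
/-!
Let `m` be the order of `t`; it divides `|T|`, so `p ∤ m`. Iterating `t x = x ^ (1 + k p)` gives
`x = (t ^ m) x = x ^ ((1 + k p) ^ m)`, so `p ^ i ∣ (1 + k p) ^ m - 1`. Writing
`(1 + k p) ^ m - 1 = (k p) · ∑_{j < m} (1 + k p) ^ j`, the sum is `≡ m ≢ 0 (mod p)`, hence
`p ^ i ∣ k p`: this is exactly `x ^ (k p) = 1`, and `p ^ (i - 1) ∣ k`.
-/

theorem Prime.pow_dvd_sub_of_pow_dvd_pow_sub_pow {R : Type*} [CommRing R] [IsDomain R]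
    {p x y : R} (hp : Prime p) (hxy : p ∣ x - y) (hx : ¬p ∣ x) {n : ℕ} (hn : ¬p ∣ (n : R))
    {i : ℕ} (h : p ^ i ∣ x ^ n - y ^ n) : p ^ i ∣ x - y :=
  hp.pow_dvd_of_dvd_mul_left i (not_dvd_geom_sum₂ hp hxy hx hn) (by rwa [geom_sum₂_mul])

theorem Subgroup.not_dvd_orderOf_of_coprime_card {G : Type*} [Group G] {H : Subgroup G} {p : ℕ}
    (hp : p.Prime) (hH : (Nat.card H).Coprime p) {g : G} (hg : g ∈ H) : ¬p ∣ orderOf g := by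
  have hdvd : orderOf g ∣ Nat.card H := by
    simpa only [Subgroup.orderOf_mk] using _root_.orderOf_dvd_natCard (⟨g, hg⟩ : H)
  exact (hp.coprime_iff_not_dvd).mp (hH.coprime_dvd_left hdvd).symm

namespace MulAut

variable {G : Type*} [Group G] {t : MulAut G} {x : G} {a : ℤ}

theorem pow_apply_eq_zpow_pow (h : t x = x ^ a) (n : ℕ) : (t ^ n) x = x ^ (a ^ n) := by
  induction n with
  | zero => simp
  | succ n ih => rw [pow_succ, mul_apply, h, map_zpow, ih, ← zpow_mul, pow_succ]

theorem orderOf_dvd_pow_orderOf_sub_one (h : t x = x ^ a) :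
    (orderOf x : ℤ) ∣ a ^ orderOf t - 1 := by
  have hfix : x ^ (a ^ orderOf t) = x := by
    rw [← pow_apply_eq_zpow_pow h, pow_orderOf_eq_one, one_apply]
  rw [orderOf_dvd_iff_zpow_eq_one, zpow_sub, zpow_one, hfix, mul_inv_cancel]

end MulAut

theorem stmt_1_general (p : ℕ) (hp : p.Prime) (D : Type*) [CommGroup D]
    (T : Subgroup (MulAut D)) (hT : (Nat.card T).Coprime p)
    (x : D) (i : ℕ) (hx : orderOf x = p ^ i)
    (t : MulAut D) (ht : t ∈ T) (k : ℤ) (h : t x = x ^ ((1 : ℤ) + k * p)) :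
    x ^ ((1 : ℤ) + k * p) = x ∧ (p : ℤ) ^ (i - 1) ∣ k := by
  have hpZ : Prime (p : ℤ) := Nat.prime_iff_prime_int.mp hp
  have hm : ¬(p : ℤ) ∣ (orderOf t : ℤ) := by
    exact_mod_cast Subgroup.not_dvd_orderOf_of_coprime_card hp hT ht
  have hkp : (p : ℤ) ^ i ∣ k * p := by
    have hdvd := MulAut.orderOf_dvd_pow_orderOf_sub_one h
    rw [hx, Nat.cast_pow] at hdvd
    have hpx : ¬(p : ℤ) ∣ 1 + k * p := fun h1 =>
      hpZ.not_dvd_one ((dvd_add_left (dvd_mul_left _ _)).mp h1)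
    simpa using hpZ.pow_dvd_sub_of_pow_dvd_pow_sub_pow (y := 1) ⟨k, by ring⟩ hpx hm
      (by rwa [one_pow])
  refine ⟨?_, ?_⟩
  · have hx1 : x ^ (k * p) = 1 := by
      rw [orderOf_dvd_iff_zpow_eq_one.symm, hx]
      exact_mod_cast hkp
    rw [zpow_add, zpow_one, hx1, mul_one]
  · cases i with
    | zero => simp
    | succ j =>
      rw [pow_succ] at hkp
      simpa using (mul_dvd_mul_iff_right (Int.natCast_ne_zero.mpr hp.ne_zero)).mp hkp

theorem stmt_1 (p : ℕ) (hp : p.Prime) (D : Type*) [CommGroup D] [Finite D]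
    (hD : IsPGroup p D)
    (T : Subgroup (MulAut D)) (hT : (Nat.card T).Coprime p)
    (x : D) (i : ℕ) (hx : orderOf x = p ^ i)
    (t : MulAut D) (ht : t ∈ T) (k : ℤ) (h : t x = x ^ ((1 : ℤ) + k * p)) :
    x ^ ((1 : ℤ) + k * p) = x ∧ (p : ℤ) ^ (i - 1) ∣ k :=
  stmt_1_general p hp D T hT x i hx t ht k h
end

section
/- Let p be a prime, D a finite abelian p-group, and T ≤ Aut(D) with gcd(|T|,p)=1. Define x ~ y iff there exist t ∈ T and k ∈ ℤ with t(x) = y^{1+kp}. Then every ~-equivalence class consisting of elements of order p^i (i ≥ 1) is a union of exactly p^{i-1} T-orbits. Consequently, the number of T-orbits of elements of order p^i equals p^{i-1} times the number of ~-equivalence classes of elements of order p^i. -/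
/-!
Write `P(x)` for the set of powers `x ^ c` with `c ≡ 1 mod p`; it is the coset `x ⟨x ^ p⟩`, so
it has `p ^ (i - 1)` elements when `x` has order `p ^ i`. The `~`-class of `x` is `T • P(x)`, so
every `T`-orbit in it meets `P(x)`, and it does so only once: if `t ∈ T` maps `y ∈ P(x)` to
`y ^ c` with `c ≡ 1 mod p`, then `c ^ |T| ≡ 1 mod p ^ i`, and as `p ∤ |T|`, lifting the exponent
gives `c ≡ 1 mod p ^ i`, i.e. `t y = y`. The classes are disjoint unions of orbits, so counting
orbits class by class gives the second claim.
-/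

theorem pow_dvd_sub_one_of_pow_dvd_pow_sub_one {R : Type*} [CommRing R] [IsDomain R] {p c : R}
    (hp : Prime p) (hc : p ∣ c - 1) {n : ℕ} (hn : ¬ p ∣ (n : R)) {j : ℕ}
    (h : p ^ j ∣ c ^ n - 1) : p ^ j ∣ c - 1 := by
  have hpc : ¬ p ∣ c := fun h' => hp.not_dvd_one (by simpa using dvd_sub h' hc)
  have hmult := emultiplicity_pow_sub_pow_of_prime hp (y := 1) (by simpa) hpc hn
  rw [one_pow] at hmult
  rw [pow_dvd_iff_le_emultiplicity] at h ⊢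
  rwa [hmult] at h

section PowersOneMod

variable {D : Type*} [Group D] {p i : ℕ} {x y : D}

theorem zpow_eq_zpow_of_pow_eq_one {n : ℕ} {a b : ℤ} (hx : x ^ n = 1)
    (h : (n : ℤ) ∣ a - b) : x ^ a = x ^ b := by
  obtain ⟨m, hm⟩ := h
  rw [show a = b + n * m by linarith, zpow_add, zpow_mul, zpow_natCast, hx, one_zpow, mul_one]

def powersOneMod (p : ℕ) (x : D) : Set D := {y | ∃ k : ℤ, y = x ^ ((1 : ℤ) + k * p)}

theorem mem_powersOneMod_self : x ∈ powersOneMod p x := ⟨0, by simp⟩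

theorem powersOneMod_subset (hy : y ∈ powersOneMod p x) :
    powersOneMod p y ⊆ powersOneMod p x := by
  obtain ⟨k, rfl⟩ := hy
  rintro _ ⟨m, rfl⟩
  exact ⟨k + m + k * m * p, by rw [← zpow_mul]; ring_nf⟩

theorem map_mem_powersOneMod {E F : Type*} [Group E] [FunLike F D E] [MonoidHomClass F D E] (f : F)
    (hy : y ∈ powersOneMod p x) : f y ∈ powersOneMod p (f x) := by
  obtain ⟨k, rfl⟩ := hy
  exact ⟨k, map_zpow f x _⟩

theorem pow_eq_one_of_mem_powersOneMod {n : ℕ} (hx : x ^ n = 1) (hy : y ∈ powersOneMod p x) :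
    y ^ n = 1 := by
  obtain ⟨k, rfl⟩ := hy
  rw [← zpow_natCast, ← zpow_mul, mul_comm, zpow_mul, zpow_natCast, hx, one_zpow]

theorem mem_powersOneMod_comm (hx : x ^ p ^ i = 1) (hy : y ∈ powersOneMod p x) :
    x ∈ powersOneMod p y := by
  have hy1 := pow_eq_one_of_mem_powersOneMod hx hy
  obtain ⟨k, rfl⟩ := hy
  obtain ⟨u, v, huv⟩ : IsCoprime ((1 : ℤ) + k * p) ((p : ℤ) ^ i) :=
    IsCoprime.pow_right ⟨1, -k, by ring⟩
  refine ⟨-u * k, ?_⟩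
  calc x = (x ^ ((1 : ℤ) + k * p)) ^ u := by
        rw [← zpow_mul, eq_comm]
        exact (zpow_eq_zpow_of_pow_eq_one hx ⟨-v, by push_cast; linear_combination huv⟩).trans
          (zpow_one x)
    _ = _ := zpow_eq_zpow_of_pow_eq_one hy1 ⟨-v, by push_cast; linear_combination huv⟩

theorem orderOf_eq_of_mem_powersOneMod (hx : x ^ p ^ i = 1) (hy : y ∈ powersOneMod p x) :
    orderOf y = orderOf x := by
  have dvd_of_mem {a b : D} (h : b ∈ powersOneMod p a) : orderOf b ∣ orderOf a := by
    obtain ⟨k, rfl⟩ := h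
    exact orderOf_dvd_of_pow_eq_one zpow_pow_orderOf
  exact Nat.dvd_antisymm (dvd_of_mem hy) (dvd_of_mem (mem_powersOneMod_comm hx hy))

theorem ncard_powersOneMod (hp : p ≠ 0) (hpx : p ∣ orderOf x) :
    (powersOneMod p x).ncard = orderOf x / p := by
  have : powersOneMod p x = (x * ·) '' (Subgroup.zpowers (x ^ p) : Set D) := by
    have hpow (k : ℤ) : x ^ ((1 : ℤ) + k * p) = x * (x ^ p) ^ k := by
      rw [zpow_add, zpow_one, mul_comm k, zpow_mul, zpow_natCast]
    ext y
    simp only [powersOneMod, hpow, Set.mem_image, SetLike.mem_coe, Subgroup.mem_zpowers_iff]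
    constructor
    · rintro ⟨k, rfl⟩
      exact ⟨_, ⟨k, rfl⟩, rfl⟩
    · rintro ⟨_, ⟨k, rfl⟩, rfl⟩
      exact ⟨k, rfl⟩
  rw [this, Set.ncard_image_of_injective _ (mul_right_injective x), ← Nat.card_coe_set_eq,
    SetLike.coe_sort_coe, Nat.card_zpowers, orderOf_pow_of_dvd hp hpx]

theorem MulAut.apply_eq_self_of_apply_eq_zpow (hp : p.Prime) {t : MulAut D} {n : ℕ}
    (htn : t ^ n = 1) (hn : ¬ p ∣ n) (hx : x ^ p ^ i = 1) {c : ℤ} (hc : (p : ℤ) ∣ c - 1)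
    (h : t x = x ^ c) : t x = x := by
  have hiter (m : ℕ) : (t ^ m) x = x ^ c ^ m := by
    induction m with
    | zero => simp
    | succ m ih => rw [pow_succ', MulAut.mul_apply, ih, map_zpow, h, ← zpow_mul, pow_succ']
  obtain ⟨j, -, hj⟩ := (Nat.dvd_prime_pow hp).mp (orderOf_dvd_of_pow_eq_one hx)
  have hcn : (p : ℤ) ^ j ∣ c ^ n - 1 := by
    have : x ^ (c ^ n - 1) = 1 := by
      rw [zpow_sub, zpow_one, ← hiter, htn, MulAut.one_apply, mul_inv_cancel]
    exact_mod_cast hj ▸ orderOf_dvd_iff_zpow_eq_one.mpr this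
  have hc1 := pow_dvd_sub_one_of_pow_dvd_pow_sub_one (Nat.prime_iff_prime_int.mp hp) hc
    (by exact_mod_cast hn) hcn
  rw [h, ← zpow_one x, ← zpow_mul, one_mul]
  exact zpow_eq_zpow_of_pow_eq_one (hj ▸ pow_orderOf_eq_one x) (by exact_mod_cast hc1)

theorem injOn_orbit_powersOneMod (hp : p.Prime) {T : Subgroup (MulAut D)}
    (hT : (Nat.card T).Coprime p) (hx : x ^ p ^ i = 1) :
    Set.InjOn (MulAction.orbit T) (powersOneMod p x) := by
  intro y hy y' hy' horb
  obtain ⟨t, ht, rfl⟩ : ∃ t ∈ T, t y = y' := by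
    have : y' ∈ MulAction.orbit T y := horb ▸ MulAction.mem_orbit_self y'
    simpa [MulAction.mem_orbit_iff] using this
  have htn : t ^ Nat.card T = 1 := by
    have h := congrArg Subtype.val (pow_card_eq_one' (x := (⟨t, ht⟩ : T)))
    rwa [Subgroup.coe_pow, Subgroup.coe_one] at h
  obtain ⟨k, hk⟩ := powersOneMod_subset (mem_powersOneMod_comm hx hy) hy'
  have hpT : ¬ p ∣ Nat.card T := (Nat.Prime.coprime_iff_not_dvd hp).mp hT.symm
  exact (MulAut.apply_eq_self_of_apply_eq_zpow hp htn hpT (pow_eq_one_of_mem_powersOneMod hx hy)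
    ⟨k, by ring⟩ hk).symm

end PowersOneMod

section PowerClass

variable {D : Type*} [Group D] {T : Subgroup (MulAut D)} {p i : ℕ} {x y z w : D}

/-- The `~`-class of `x`. -/
def powerClass (T : Subgroup (MulAut D)) (p : ℕ) (x : D) : Set D :=
  {z | ∃ t ∈ T, t z ∈ powersOneMod p x}

theorem mem_powerClass_self : x ∈ powerClass T p x := ⟨1, one_mem T, mem_powersOneMod_self⟩

theorem mem_powerClass_trans (hz : z ∈ powerClass T p x) (hw : w ∈ powerClass T p z) :
    w ∈ powerClass T p x := by
  obtain ⟨t, ht, htz⟩ := hz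
  obtain ⟨s, hs, hsw⟩ := hw
  exact ⟨t * s, mul_mem ht hs, powersOneMod_subset htz (map_mem_powersOneMod t hsw)⟩

theorem mem_powerClass_comm (hx : x ^ p ^ i = 1) (hz : z ∈ powerClass T p x) :
    x ∈ powerClass T p z := by
  obtain ⟨t, ht, htz⟩ := hz
  refine ⟨t⁻¹, inv_mem ht, ?_⟩
  simpa using map_mem_powersOneMod t⁻¹ (mem_powersOneMod_comm hx htz)

theorem powerClass_eq_of_mem (hx : x ^ p ^ i = 1) (hz : z ∈ powerClass T p x) :
    powerClass T p z = powerClass T p x :=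
  Set.Subset.antisymm (fun _ hw => mem_powerClass_trans hz hw)
    (fun _ hw => mem_powerClass_trans (mem_powerClass_comm hx hz) hw)

theorem orderOf_eq_of_mem_powerClass (hx : x ^ p ^ i = 1) (hz : z ∈ powerClass T p x) :
    orderOf z = orderOf x := by
  obtain ⟨t, -, htz⟩ := hz
  rw [← MulEquiv.orderOf_eq t z, orderOf_eq_of_mem_powersOneMod hx htz]

theorem orbit_subset_powerClass : MulAction.orbit T y ⊆ powerClass T p y := by
  rintro _ ⟨t, rfl⟩
  refine ⟨(t : MulAut D)⁻¹, inv_mem t.2, ?_⟩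
  simpa [Subgroup.smul_def] using mem_powersOneMod_self

theorem image_orbit_powerClass :
    MulAction.orbit T '' powerClass T p x = MulAction.orbit T '' powersOneMod p x := by
  refine Set.Subset.antisymm ?_ (Set.image_mono fun y hy => ⟨1, one_mem T, hy⟩)
  rintro _ ⟨z, ⟨t, ht, htz⟩, rfl⟩
  exact ⟨t z, htz, MulAction.orbit_eq_iff.mpr ⟨⟨t, ht⟩, rfl⟩⟩

theorem ncard_image_orbit_powerClass (hp : p.Prime) (hT : (Nat.card T).Coprime p)
    (hx : orderOf x = p ^ i) (hi : i ≠ 0) :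
    (MulAction.orbit T '' powerClass T p x).ncard = p ^ (i - 1) := by
  obtain ⟨j, rfl⟩ := Nat.exists_eq_succ_of_ne_zero hi
  rw [image_orbit_powerClass,
    (injOn_orbit_powersOneMod hp hT (hx ▸ pow_orderOf_eq_one x)).ncard_image,
    ncard_powersOneMod hp.ne_zero (hx ▸ dvd_pow_self p hi), hx, pow_succ,
    Nat.mul_div_cancel _ hp.pos, Nat.succ_sub_one]

end PowerClass

theorem ncard_biUnion_of_ncard_eq {ι α : Type*} {t : Set ι} (ht : t.Finite) {s : ι → Set α}
    (hs : ∀ i ∈ t, (s i).Finite) {m : ℕ} (hm : ∀ i ∈ t, (s i).ncard = m)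
    (h : t.PairwiseDisjoint s) : (⋃ i ∈ t, s i).ncard = m * t.ncard := by
  rw [ht.ncard_biUnion hs h, finsum_mem_congr rfl hm, ← finsum_one, mul_finsum_mem, mul_one]

section Counting

variable {D : Type*} [Group D] {T : Subgroup (MulAut D)} {p i : ℕ}

theorem image_orbit_eq_biUnion :
    MulAction.orbit T '' {x : D | orderOf x = p ^ i} =
      ⋃ c ∈ powerClass T p '' {x : D | orderOf x = p ^ i}, MulAction.orbit T '' c := by
  rw [Set.biUnion_image, ← Set.image_iUnion₂]
  congr 1
  ext y
  simp only [Set.mem_iUnion, Set.mem_ofPred_eq, exists_prop]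
  constructor
  · exact fun hy => ⟨y, hy, mem_powerClass_self⟩
  · rintro ⟨x, hx, hy⟩
    exact (orderOf_eq_of_mem_powerClass (hx ▸ pow_orderOf_eq_one x) hy).trans hx

theorem pairwiseDisjoint_image_orbit_powerClass :
    (powerClass T p '' {x : D | orderOf x = p ^ i}).PairwiseDisjoint (MulAction.orbit T '' ·) := by
  rintro _ ⟨x, hx, rfl⟩ _ ⟨x', hx', rfl⟩ hne
  refine Set.disjoint_left.mpr ?_
  rintro _ ⟨y, hy, rfl⟩ ⟨y', hy', horb⟩
  have hy'y : y' ∈ powerClass T p y :=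
    orbit_subset_powerClass (horb ▸ MulAction.mem_orbit_self y')
  exact hne <| (powerClass_eq_of_mem (hx ▸ pow_orderOf_eq_one x)
    (mem_powerClass_trans hy hy'y)).symm.trans
    (powerClass_eq_of_mem (hx' ▸ pow_orderOf_eq_one x') hy')

theorem ncard_image_orbit_eq_mul [Finite D] (hp : p.Prime) (hT : (Nat.card T).Coprime p)
    (hi : i ≠ 0) :
    (MulAction.orbit T '' {x : D | orderOf x = p ^ i}).ncard =
      p ^ (i - 1) * (powerClass T p '' {x : D | orderOf x = p ^ i}).ncard := by
  rw [image_orbit_eq_biUnion, ncard_biUnion_of_ncard_eq (Set.toFinite _) (fun _ _ => Set.toFinite _)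
    _ pairwiseDisjoint_image_orbit_powerClass]
  rintro _ ⟨x, hx, rfl⟩
  exact ncard_image_orbit_powerClass hp hT hx hi

end Counting

theorem stmt_2_general (p : ℕ) (hp : p.Prime) (D : Type*) [CommGroup D] [Finite D]
    (T : Subgroup (MulAut D)) (hT : (Nat.card T).Coprime p)
    (i : ℕ) (hi : 1 ≤ i) :
    (∀ x : D, orderOf x = p ^ i →
      Set.ncard {s : Set D |
        ∃ y : D, (∃ t ∈ T, ∃ k : ℤ, t y = x ^ ((1 : ℤ) + k * p)) ∧
          s = {z : D | ∃ t ∈ T, t y = z}} = p ^ (i - 1)) ∧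
    Set.ncard {s : Set D | ∃ x : D, orderOf x = p ^ i ∧
        s = {z : D | ∃ t ∈ T, t x = z}}
      = p ^ (i - 1) *
        Set.ncard {s : Set D | ∃ x : D, orderOf x = p ^ i ∧
          s = {z : D | ∃ t ∈ T, ∃ k : ℤ, t z = x ^ ((1 : ℤ) + k * p)}} := by
  have horbit (y : D) : {z : D | ∃ t ∈ T, t y = z} = MulAction.orbit T y := by
    ext
    simp [MulAction.mem_orbit_iff]
  have himage {A : Set D} (f : D → Set D) : {s | ∃ y, y ∈ A ∧ s = f y} = f '' A := by
    simp only [Set.image, eq_comm]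
  refine ⟨fun x hx => ?_, ?_⟩
  · change Set.ncard {s | ∃ y, y ∈ powerClass T p x ∧ s = {z | ∃ t ∈ T, t y = z}} = _
    simp only [horbit, himage]
    exact ncard_image_orbit_powerClass hp hT hx (by omega)
  · set S := {x : D | orderOf x = p ^ i}
    change Set.ncard {s | ∃ x, x ∈ S ∧ s = {z | ∃ t ∈ T, t x = z}} =
      p ^ (i - 1) * Set.ncard {s | ∃ x, x ∈ S ∧ s = powerClass T p x}
    simp only [horbit, himage]
    exact ncard_image_orbit_eq_mul hp hT (by omega)

theorem stmt_2 (p : ℕ) (hp : p.Prime) (D : Type*) [CommGroup D] [Finite D]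
    (hD : IsPGroup p D)
    (T : Subgroup (MulAut D)) (hT : (Nat.card T).Coprime p)
    (i : ℕ) (hi : 1 ≤ i) :
    (∀ x : D, orderOf x = p ^ i →
      Set.ncard {s : Set D |
        ∃ y : D, (∃ t ∈ T, ∃ k : ℤ, t y = x ^ ((1 : ℤ) + k * p)) ∧
          s = {z : D | ∃ t ∈ T, t y = z}} = p ^ (i - 1)) ∧
    Set.ncard {s : Set D | ∃ x : D, orderOf x = p ^ i ∧
        s = {z : D | ∃ t ∈ T, t x = z}}
      = p ^ (i - 1) *
        Set.ncard {s : Set D | ∃ x : D, orderOf x = p ^ i ∧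
          s = {z : D | ∃ t ∈ T, ∃ k : ℤ, t z = x ^ ((1 : ℤ) + k * p)}} :=
  stmt_2_general p hp D T hT i hi
end

section
/- Let p be a prime, D ≅ C_{p^2} × C_{p^2}, and T ≤ Aut(D) a p'-group. With the equivalence x ~ y iff ∃ t ∈ T, k ∈ ℤ with t(x) = y^{1+kp}, let d_1 (resp. d_2) be the number of equivalence classes of elements of order p (resp. p^2). Then d_1 ≤ d_2. -/
/-!
If every element has order dividing `p ^ 2`, then `x ~ y` is an equivalence relation
(`1 + k p` is invertible modulo `p ^ 2`, with inverse `1 - k p`) and it is compatible with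
`x ↦ x ^ p`. In `C_{p²} × C_{p²}` every element of order `p` is the `p`-th power of an
element of order `p ^ 2`, so sending the class of `y` to the class of `y ^ p` maps the
classes of elements of order `p ^ 2` onto the classes of elements of order `p`.
-/

section PowClass

variable {G : Type*} [Group G] (T : Subgroup (MulAut G)) (p : ℕ)

def powClass (x : G) : Set G :=
  {z | ∃ t ∈ T, ∃ k : ℤ, t z = x ^ ((1 : ℤ) + k * p)}

def powClasses (n : ℕ) : Set (Set G) :=
  {s | ∃ x, orderOf x = n ∧ s = powClass T p x}

variable {T p}

lemma mem_powClass_self (x : G) : x ∈ powClass T p x :=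
  ⟨1, one_mem T, 0, by simp⟩

lemma mem_powClass_trans {x y z : G} (hzx : z ∈ powClass T p x) (hxy : x ∈ powClass T p y) :
    z ∈ powClass T p y := by
  obtain ⟨s, hs, k, hk⟩ := hzx
  obtain ⟨t, ht, l, hl⟩ := hxy
  refine ⟨t * s, mul_mem ht hs, k + l + k * l * p, ?_⟩
  rw [MulAut.mul_apply, hk, map_zpow, hl, ← zpow_mul]
  ring_nf

lemma mem_powClass_symm (hG : ∀ g : G, g ^ (p ^ 2) = 1) {x y : G} (h : x ∈ powClass T p y) :
    y ∈ powClass T p x := by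
  obtain ⟨t, ht, k, hk⟩ := h
  refine ⟨t⁻¹, inv_mem ht, -k, ?_⟩
  have hy : y ^ (((1 : ℤ) + k * p) * (1 + -k * p)) = y := by
    have : ((1 : ℤ) + k * p) * (1 + -k * p) = 1 + (p ^ 2 : ℕ) * (-k ^ 2) := by push_cast; ring
    rw [this, zpow_add, zpow_mul, zpow_natCast, hG, one_zpow, mul_one, zpow_one]
  rw [MulAut.inv_apply, MulEquiv.symm_apply_eq, map_zpow, hk, ← zpow_mul, hy]

lemma powClass_eq_of_mem (hG : ∀ g : G, g ^ (p ^ 2) = 1) {x y : G} (h : x ∈ powClass T p y) :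
    powClass T p x = powClass T p y :=
  Set.ext fun _ ↦ ⟨fun hz ↦ mem_powClass_trans hz h,
    fun hz ↦ mem_powClass_trans hz (mem_powClass_symm hG h)⟩

lemma pow_mem_powClass_pow {x y : G} (h : x ∈ powClass T p y) :
    x ^ p ∈ powClass T p (y ^ p) := by
  obtain ⟨t, ht, k, hk⟩ := h
  refine ⟨t, ht, k, ?_⟩
  rw [map_pow, hk, ← zpow_natCast, ← zpow_natCast, ← zpow_mul, ← zpow_mul, mul_comm]

lemma biUnion_powClass_pow (hG : ∀ g : G, g ^ (p ^ 2) = 1) (y : G) :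
    ⋃ z ∈ powClass T p y, powClass T p (z ^ p) = powClass T p (y ^ p) := by
  refine subset_antisymm (Set.iUnion₂_subset fun z hz ↦ ?_) ?_
  · exact (powClass_eq_of_mem hG (pow_mem_powClass_pow hz)).subset
  · exact Set.subset_biUnion_of_mem (u := fun z ↦ powClass T p (z ^ p)) (mem_powClass_self y)

lemma ncard_powClasses_le [Finite G] (hG : ∀ g : G, g ^ (p ^ 2) = 1)
    (hroot : ∀ x : G, orderOf x = p → ∃ y, orderOf y = p ^ 2 ∧ y ^ p = x) :
    (powClasses T p p).ncard ≤ (powClasses T p (p ^ 2)).ncard := by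
  let φ : Set G → Set G := fun s ↦ ⋃ z ∈ s, powClass T p (z ^ p)
  have hsurj : powClasses T p p ⊆ φ '' powClasses T p (p ^ 2) := by
    rintro _ ⟨x, hx, rfl⟩
    obtain ⟨y, hy, rfl⟩ := hroot x hx
    exact ⟨powClass T p y, ⟨y, hy, rfl⟩, biUnion_powClass_pow hG y⟩
  exact (Set.ncard_le_ncard hsurj).trans Set.ncard_image_le

end PowClass

lemma ZMod.exists_mul_eq_of_mul_eq_zero {p : ℕ} [NeZero p] {a : ZMod (p ^ 2)}
    (ha : (p : ZMod (p ^ 2)) * a = 0) : ∃ b : ZMod (p ^ 2), (p : ZMod (p ^ 2)) * b = a := by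
  have hdvd : p * p ∣ p * a.val := by
    rw [← pow_two, ← ZMod.natCast_eq_zero_iff]
    push_cast
    rwa [ZMod.natCast_zmod_val]
  obtain ⟨c, hc⟩ := Nat.dvd_of_mul_dvd_mul_left (NeZero.pos p) hdvd
  exact ⟨c, by rw [← Nat.cast_mul, ← hc, ZMod.natCast_zmod_val]⟩

namespace Homocyclic

variable {p : ℕ}

abbrev D (p : ℕ) := Multiplicative (ZMod (p ^ 2) × ZMod (p ^ 2))

lemma pow_pow_two_eq_one (g : D p) : g ^ (p ^ 2) = 1 := by
  apply Multiplicative.toAdd.injective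
  rw [toAdd_pow, toAdd_one, ← Nat.cast_smul_eq_nsmul (ZMod (p ^ 2)), ZMod.natCast_self, zero_smul]

lemma exists_pow_eq_of_pow_eq_one [NeZero p] {x : D p} (hx : x ^ p = 1) :
    ∃ y : D p, y ^ p = x := by
  have h0 : p • x.toAdd = 0 := by rw [← toAdd_pow, hx, toAdd_one]
  obtain ⟨b₁, hb₁⟩ := ZMod.exists_mul_eq_of_mul_eq_zero (by simpa using congrArg Prod.fst h0)
  obtain ⟨b₂, hb₂⟩ := ZMod.exists_mul_eq_of_mul_eq_zero (by simpa using congrArg Prod.snd h0)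
  refine ⟨Multiplicative.ofAdd (b₁, b₂), Multiplicative.toAdd.injective ?_⟩
  ext <;> simp [hb₁, hb₂]

lemma exists_orderOf_eq_pow_two_and_pow_eq [Fact p.Prime] {x : D p} (hx : orderOf x = p) :
    ∃ y : D p, orderOf y = p ^ 2 ∧ y ^ p = x := by
  obtain ⟨y, rfl⟩ := exists_pow_eq_of_pow_eq_one (hx ▸ pow_orderOf_eq_one x)
  refine ⟨y, orderOf_eq_prime_pow (n := 1) ?_ (pow_pow_two_eq_one y), rfl⟩
  rw [pow_one]
  rintro h
  rw [h, orderOf_one] at hx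
  exact (Fact.out : p.Prime).one_lt.ne' hx.symm

end Homocyclic

theorem stmt_3_general (p : ℕ) (hp : p.Prime)
    (T : Subgroup (MulAut (Multiplicative (ZMod (p ^ 2) × ZMod (p ^ 2))))) :
    Set.ncard {s : Set (Multiplicative (ZMod (p ^ 2) × ZMod (p ^ 2))) |
        ∃ x, orderOf x = p ∧
          s = {z | ∃ t ∈ T, ∃ k : ℤ, t z = x ^ ((1 : ℤ) + k * p)}} ≤
    Set.ncard {s : Set (Multiplicative (ZMod (p ^ 2) × ZMod (p ^ 2))) |
        ∃ x, orderOf x = p ^ 2 ∧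
          s = {z | ∃ t ∈ T, ∃ k : ℤ, t z = x ^ ((1 : ℤ) + k * p)}} := by
  have : Fact p.Prime := ⟨hp⟩
  exact ncard_powClasses_le Homocyclic.pow_pow_two_eq_one
    fun _ ↦ Homocyclic.exists_orderOf_eq_pow_two_and_pow_eq

theorem stmt_3 (p : ℕ) (hp : p.Prime)
    (T : Subgroup (MulAut (Multiplicative (ZMod (p ^ 2) × ZMod (p ^ 2)))))
    (hT : (Nat.card T).Coprime p) :
    Set.ncard {s : Set (Multiplicative (ZMod (p ^ 2) × ZMod (p ^ 2))) |
        ∃ x, orderOf x = p ∧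
          s = {z | ∃ t ∈ T, ∃ k : ℤ, t z = x ^ ((1 : ℤ) + k * p)}} ≤
    Set.ncard {s : Set (Multiplicative (ZMod (p ^ 2) × ZMod (p ^ 2))) |
        ∃ x, orderOf x = p ^ 2 ∧
          s = {z | ∃ t ∈ T, ∃ k : ℤ, t z = x ^ ((1 : ℤ) + k * p)}} :=
  stmt_3_general p hp T
end

section
/- Let p be a prime, D ≅ C_{p^2} × C_p × C_p, and T ≤ Aut(D) a p'-group. With the equivalence x ~ y iff ∃ t ∈ T, k ∈ ℤ with t(x) = y^{1+kp}, let d_1 (resp. d_2) be the number of equivalence classes of elements of order p (resp. p^2). Then d_1 > d_2. -/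
/-!
For `x` of order `p` one has `x ^ (1 + k p) = x`, so the class of `x` is its `T`-orbit and
`d₁ + 1` is the number of `T`-orbits on `Ω = {x | x ^ p = 1}`. For `x` of order `p²` the set
`{x ^ (1 + k p)}` is the whole coset `x V` of `V = D ^ p` (which has order `p`), so `d₂` is the
number of `T`-orbits on `D ⧸ V` outside `Ω ⧸ V`.

Since `|T|` is prime to `p`, averaging over `⟨t⟩` shows that fixed points of `t` lift along
`D → D ⧸ V` and along `(· ^ p) : D → V`; hence
`|C_Ω(t)| · |C_V(t)| = |C_D(t)| = |C_{D ⧸ V}(t)| · |C_V(t)|` for every `t ∈ T`, and Burnside's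
lemma gives as many `T`-orbits on `Ω` as on `D ⧸ V`. As `Ω ⧸ V` already contains the two orbits
`{1}` and that of `(0, 1, 0)`, `d₁ + 1 ≥ d₂ + 2`.
-/

open MulAction

namespace MulAction

variable {G X Y : Type*} [Group G] [MulAction G X] [MulAction G Y]

theorem ncard_range_orbit : (Set.range (orbit G : X → Set X)).ncard =
    Nat.card (orbitRel.Quotient G X) := by
  rw [← Set.ncard_range_of_injective orbitRel.Quotient.orbit_injective]
  congr 1
  ext s
  exact ⟨fun ⟨x, hx⟩ => ⟨Quotient.mk'' x, hx⟩,
    fun ⟨q, hq⟩ => ⟨q.out, by rw [← hq, orbitRel.Quotient.orbit_eq_orbit_out q Quotient.out_eq']⟩⟩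

theorem ncard_range_orbit_eq_add [Finite X] {S : Set X} (hS : ∀ g : G, ∀ x ∈ S, g • x ∈ S) :
    (Set.range (orbit G : X → Set X)).ncard = (orbit G '' S).ncard + (orbit G '' Sᶜ).ncard := by
  have hdisj : Disjoint (orbit G '' S) (orbit G '' Sᶜ) := by
    refine Set.disjoint_left.mpr ?_
    rintro _ ⟨x, hx, rfl⟩ ⟨y, hy, hxy⟩
    obtain ⟨g, rfl⟩ := mem_orbit_iff.mp (hxy ▸ mem_orbit_self y : y ∈ orbit G x)
    exact hy (hS g x hx)
  rw [← Set.image_univ, ← Set.union_compl_self S, Set.image_union]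
  exact Set.ncard_union_eq hdisj (Set.toFinite _) (Set.toFinite _)

theorem ncard_range_orbit_eq_of_card_fixedBy_eq [Finite G] [Finite X] [Finite Y]
    (h : ∀ g : G, Nat.card (fixedBy X g) = Nat.card (fixedBy Y g)) :
    (Set.range (orbit G : X → Set X)).ncard = (Set.range (orbit G : Y → Set Y)).ncard := by
  classical
  cases nonempty_fintype G
  cases nonempty_fintype X
  cases nonempty_fintype Y
  have hX := sum_card_fixedBy_eq_card_orbits_mul_card_group G X
  have hY := sum_card_fixedBy_eq_card_orbits_mul_card_group G Y
  simp only [← Nat.card_eq_fintype_card, h] at hX hY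
  rw [ncard_range_orbit, ncard_range_orbit]
  exact Nat.eq_of_mul_eq_mul_right Nat.card_pos (hX.symm.trans hY)

end MulAction

namespace CoprimeAction

variable {G A : Type*} [Group G] [CommGroup A] [MulDistribMulAction G A]

theorem smul_prod_range_orderOf (g : G) (a : A) :
    g • ∏ i ∈ Finset.range (orderOf g), (g ^ i) • a =
      ∏ i ∈ Finset.range (orderOf g), (g ^ i) • a := by
  have h := Finset.prod_range_succ' (fun i => (g ^ i) • a) (orderOf g)
  rw [Finset.prod_range_succ, pow_orderOf_eq_one, pow_zero] at h
  rw [Finset.smul_prod']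
  simp_rw [smul_smul, ← pow_succ']
  exact (mul_right_cancel h).symm

theorem pow_smul_mul_inv_mem {H : Subgroup A} {g : G} (hH : ∀ h ∈ H, g • h ∈ H) {a : A}
    (ha : g • a * a⁻¹ ∈ H) (i : ℕ) : (g ^ i) • a * a⁻¹ ∈ H := by
  induction i with
  | zero => simp
  | succ i ih =>
    have : (g ^ (i + 1)) • a * a⁻¹ = g • ((g ^ i) • a * a⁻¹) * (g • a * a⁻¹) := by
      rw [pow_succ', mul_smul, smul_mul', smul_inv']
      group
    rw [this]
    exact mul_mem (hH _ ih) ha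

/-- The witness is an `orderOf g`-th root of the norm `∏ gⁱ • a`, which exists because
`orderOf g` is prime to `|A|`. -/
theorem exists_smul_eq_self_mul_inv_mem {g : G} (hg : (Nat.card A).Coprime (orderOf g))
    {H : Subgroup A} (hH : ∀ h ∈ H, g • h ∈ H) {a : A} (ha : g • a * a⁻¹ ∈ H) :
    ∃ b : A, g • b = b ∧ b * a⁻¹ ∈ H := by
  set N := ∏ i ∈ Finset.range (orderOf g), (g ^ i) • a
  have hN : N * (a ^ orderOf g)⁻¹ ∈ H := by
    have : N * (a ^ orderOf g)⁻¹ = ∏ i ∈ Finset.range (orderOf g), ((g ^ i) • a * a⁻¹) := by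
      rw [Finset.prod_mul_distrib, Finset.prod_const, Finset.card_range, inv_pow]
    rw [this]
    exact Subgroup.prod_mem _ fun i _ => pow_smul_mul_inv_mem hH ha i
  have hroot : (a ^ orderOf g) ^ (Nat.card A).gcdB (orderOf g) = a :=
    (powCoprime hg).symm_apply_apply a
  refine ⟨N ^ (Nat.card A).gcdB (orderOf g), by rw [smul_zpow', smul_prod_range_orderOf], ?_⟩
  rw [← hroot, ← inv_zpow, ← mul_zpow]
  exact zpow_mem hN _

variable (A) in
def fixedBySubgroup (g : G) : Subgroup A where
  carrier := fixedBy A g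
  one_mem' := smul_one g
  mul_mem' {a b} ha hb := by
    rw [mem_fixedBy] at ha hb ⊢
    rw [smul_mul', ha, hb]
  inv_mem' {a} ha := by
    rw [mem_fixedBy] at ha ⊢
    rw [smul_inv', ha]

variable (G A) in
def torsionBy (n : ℕ) : SubMulAction G A where
  carrier := {x | x ^ n = 1}
  smul_mem' g x (hx : x ^ n = 1) := show (g • x) ^ n = 1 by rw [← smul_pow', hx, smul_one]

instance (n : ℕ) : QuotientAction G (powMonoidHom n : A →* A).range where
  inv_mul_mem g a a' := by
    rintro ⟨z, hz⟩
    exact ⟨g • z, by rw [powMonoidHom_apply, ← smul_pow', ← powMonoidHom_apply, hz, ← smul_inv',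
      ← smul_mul']⟩

theorem exists_smul_eq_self_pow_eq {g : G} (hg : (Nat.card A).Coprime (orderOf g)) {n : ℕ}
    {c : A} (hc : g • c = c) (hcn : c ∈ (powMonoidHom n : A →* A).range) :
    ∃ b : A, g • b = b ∧ b ^ n = c := by
  obtain ⟨z, rfl⟩ := hcn
  have hK : ∀ v ∈ (powMonoidHom n : A →* A).ker, g • v ∈ (powMonoidHom n : A →* A).ker :=
    fun v (hv : v ^ n = 1) => show (g • v) ^ n = 1 by rw [← smul_pow', hv, smul_one]
  have hz : g • z * z⁻¹ ∈ (powMonoidHom n : A →* A).ker := by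
    rw [MonoidHom.mem_ker, map_mul, map_inv, powMonoidHom_apply, ← smul_pow']
    exact mul_inv_eq_one.mpr hc
  obtain ⟨b, hb, hbz⟩ := exists_smul_eq_self_mul_inv_mem hg hK hz
  rw [MonoidHom.mem_ker, map_mul, map_inv, mul_inv_eq_one] at hbz
  exact ⟨b, hb, hbz⟩

/-- With `F` the fixed points of `g`, `V = A ^ n` and `f : F → A ⧸ V`, both `|ker (· ^ n : F → F)|`
and `|Fix (A ⧸ V)| = |range f|` are `|F| / |F ∩ V|`: coprimality makes `F ∩ V` the `n`-th powers
of `F` and `range f` all of `Fix (A ⧸ V)`. -/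
theorem card_fixedBy_torsionBy_eq [Finite A] (n : ℕ) {g : G}
    (hg : (Nat.card A).Coprime (orderOf g)) :
    Nat.card (fixedBy (torsionBy G A n) g) =
      Nat.card (fixedBy (A ⧸ (powMonoidHom n : A →* A).range) g) := by
  set V := (powMonoidHom n : A →* A).range
  set F := fixedBySubgroup A g
  let f : F →* A ⧸ V := (QuotientGroup.mk' V).comp F.subtype
  let h : F →* F := powMonoidHom n
  have hker : f.ker = h.range := by
    ext ⟨c, hc : g • c = c⟩
    rw [MonoidHom.mem_ker, MonoidHom.mem_range]
    refine ⟨fun hcV => ?_, fun ⟨d, hd⟩ => ?_⟩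
    · obtain ⟨b, hb, hbc⟩ :=
        exists_smul_eq_self_pow_eq hg hc ((QuotientGroup.eq_one_iff c).mp hcV)
      exact ⟨⟨b, hb⟩, Subtype.ext hbc⟩
    · exact (QuotientGroup.eq_one_iff c).mpr ⟨d, congrArg Subtype.val hd⟩
  have hf : Nat.card f.range = Nat.card (fixedBy (A ⧸ V) g) := by
    have hV : ∀ v ∈ V, g • v ∈ V := by
      rintro _ ⟨z, rfl⟩
      exact ⟨g • z, (smul_pow' g z n).symm⟩
    refine Nat.card_congr (Equiv.setCongr (Set.ext fun q => ?_))
    obtain ⟨a, rfl⟩ := QuotientGroup.mk_surjective q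
    rw [mem_fixedBy]
    refine ⟨fun ⟨⟨c, hc⟩, hca⟩ => ?_, fun ha => ?_⟩
    · rw [← hca]
      exact (Quotient.smul_mk V g c).trans (congrArg _ hc)
    · rw [Quotient.smul_mk, QuotientGroup.eq_iff_div_mem, div_eq_mul_inv] at ha
      obtain ⟨b, hb, hba⟩ := exists_smul_eq_self_mul_inv_mem hg hV ha
      exact ⟨⟨b, hb⟩, QuotientGroup.eq_iff_div_mem.mpr (by rwa [div_eq_mul_inv])⟩
  have hh : Nat.card h.ker = Nat.card (fixedBy (torsionBy G A n) g) :=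
    Nat.card_congr
      { toFun c := ⟨⟨c.1.1, congrArg Subtype.val c.2⟩, Subtype.ext c.1.2⟩
        invFun x := ⟨⟨x.1.1, congrArg Subtype.val x.2⟩, Subtype.ext x.1.2⟩ }
  have hcard : Nat.card h.ker * Nat.card h.range = Nat.card f.ker * Nat.card f.range := by
    rw [← Subgroup.index_ker f, f.ker.card_mul_index, ← Subgroup.index_ker h,
      h.ker.card_mul_index]
  rw [← hker, mul_comm] at hcard
  rw [← hf, ← hh]
  exact Nat.eq_of_mul_eq_mul_left Nat.card_pos hcard

theorem ncard_range_orbit_torsionBy_eq [Finite G] [Finite A]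
    (hGA : (Nat.card A).Coprime (Nat.card G)) (n : ℕ) :
    (Set.range (orbit G : torsionBy G A n → Set (torsionBy G A n))).ncard =
      (Set.range (orbit G : A ⧸ (powMonoidHom n : A →* A).range → Set _)).ncard :=
  ncard_range_orbit_eq_of_card_fixedBy_eq fun g =>
    card_fixedBy_torsionBy_eq n (hGA.coprime_dvd_right (orderOf_dvd_natCard g))

end CoprimeAction

open CoprimeAction

theorem Subgroup.mem_orbit_iff_exists_apply_eq {M : Type*} [Monoid M] (T : Subgroup (MulAut M))
    {x y : M} : y ∈ orbit T x ↔ ∃ t ∈ T, t x = y := by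
  simp only [mem_orbit_iff, Subtype.exists, Subgroup.mk_smul, MulAut.smul_def, exists_prop]

theorem ZMod.isUnit_of_prime_nsmul_ne_zero {p : ℕ} (hp : p.Prime) {a : ZMod (p ^ 2)}
    (ha : p • a ≠ 0) : IsUnit a := by
  have : NeZero (p ^ 2) := ⟨pow_ne_zero 2 hp.ne_zero⟩
  rw [← ZMod.natCast_zmod_val a, ZMod.isUnit_natCast_iff_not_dvd_pow hp two_pos]
  rintro ⟨m, hm⟩
  apply ha
  rw [← ZMod.natCast_zmod_val a, hm, nsmul_eq_mul, ← Nat.cast_mul, ← mul_assoc, ← sq,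
    Nat.cast_mul, ZMod.natCast_self, zero_mul]

namespace ZModSqProd

variable {p : ℕ}

local notation "𝔻" => Multiplicative (ZMod (p ^ 2) × ZMod p × ZMod p)

theorem pow_prime_eq (x : 𝔻) : x ^ p = .ofAdd (p • x.toAdd.1, 0, 0) := by
  apply Multiplicative.toAdd.injective
  rw [toAdd_pow, toAdd_ofAdd]
  exact Prod.ext rfl (Prod.ext (by simp) (by simp))

theorem pow_prime_sq_eq_one (x : 𝔻) : x ^ p ^ 2 = 1 := by
  apply Multiplicative.toAdd.injective
  rw [toAdd_pow, toAdd_one]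
  exact Prod.ext (show p ^ 2 • x.toAdd.1 = 0 by rw [nsmul_eq_mul, ZMod.natCast_self, zero_mul])
    (Prod.ext (by simp [nsmul_eq_mul]) (by simp [nsmul_eq_mul]))

theorem zpow_one_add_mul_prime (x : 𝔻) (k : ℤ) : x ^ ((1 : ℤ) + k * p) = x * (x ^ p) ^ k := by
  rw [zpow_add, zpow_one, mul_comm k, zpow_mul, zpow_natCast]

def classOf (T : Subgroup (MulAut 𝔻)) (x : 𝔻) : Set 𝔻 :=
  {z | ∃ t ∈ T, ∃ k : ℤ, t z = x ^ ((1 : ℤ) + k * p)}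

theorem classOf_eq_orbit (T : Subgroup (MulAut 𝔻)) {x : 𝔻} (hx : x ^ p = 1) :
    classOf T x = orbit T x := by
  ext z
  simp only [classOf, zpow_one_add_mul_prime, hx, one_zpow, mul_one, exists_const]
  rw [mem_orbit_symm, Subgroup.mem_orbit_iff_exists_apply_eq]
  rfl

theorem card_coprime_of_coprime {n : ℕ} (h : n.Coprime p) : (Nat.card 𝔻).Coprime n := by
  rw [Nat.card_congr Multiplicative.toAdd, Nat.card_prod, Nat.card_prod, Nat.card_zmod,
    Nat.card_zmod]
  exact (h.symm.pow_left 2).mul_left (h.symm.mul_left h.symm)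

variable [hp : Fact p.Prime]

theorem orderOf_eq_prime_sq_iff (x : 𝔻) : orderOf x = p ^ 2 ↔ x ^ p ≠ 1 := by
  refine ⟨fun h => pow_ne_one_of_lt_orderOf hp.out.ne_zero ?_, fun h => ?_⟩
  · rw [h]
    exact lt_self_pow₀ hp.out.one_lt one_lt_two
  · exact orderOf_eq_prime_pow (by rwa [pow_one]) (pow_prime_sq_eq_one x)

theorem range_powMonoidHom_le_zpowers {x : 𝔻} (hx : x ^ p ≠ 1) :
    (powMonoidHom p : 𝔻 →* 𝔻).range ≤ Subgroup.zpowers (x ^ p) := by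
  rintro _ ⟨z, rfl⟩
  have hxa : p • x.toAdd.1 ≠ 0 := fun h => hx (by rw [pow_prime_eq, h]; rfl)
  obtain ⟨u, hu⟩ := ZMod.isUnit_of_prime_nsmul_ne_zero hp.out hxa
  obtain ⟨k, hk⟩ := ZMod.intCast_surjective (z.toAdd.1 * ((u⁻¹ : (ZMod (p ^ 2))ˣ) : ZMod (p ^ 2)))
  refine ⟨k, Multiplicative.toAdd.injective ?_⟩
  rw [toAdd_zpow, pow_prime_eq, powMonoidHom_apply, pow_prime_eq]
  simp only [toAdd_ofAdd, Prod.smul_mk, smul_zero]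
  rw [zsmul_eq_mul, hk, nsmul_eq_mul, nsmul_eq_mul, ← hu, mul_left_comm, mul_assoc, Units.inv_mul,
    mul_one]

theorem ofAdd_zero_one_zero_notMem_range :
    Multiplicative.ofAdd (0, 1, 0) ∉ (powMonoidHom p : 𝔻 →* 𝔻).range := by
  rintro ⟨z, hz⟩
  rw [powMonoidHom_apply, pow_prime_eq] at hz
  exact zero_ne_one (congrArg (fun y : 𝔻 => y.toAdd.2.1) hz)

theorem mk_eq_mk_iff_exists_zpow {x : 𝔻} (hx : x ^ p ≠ 1) (y : 𝔻) :
    (y : 𝔻 ⧸ (powMonoidHom p : 𝔻 →* 𝔻).range) = x ↔ ∃ k : ℤ, y = x ^ ((1 : ℤ) + k * p) := by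
  simp only [QuotientGroup.eq, zpow_one_add_mul_prime]
  constructor
  · intro h
    obtain ⟨k, hk⟩ := Subgroup.mem_zpowers_iff.mp
      (range_powMonoidHom_le_zpowers hx (by simpa using inv_mem h))
    exact ⟨k, by rw [hk, mul_inv_cancel_left]⟩
  · rintro ⟨k, rfl⟩
    rw [mul_inv_rev, inv_mul_cancel_right]
    exact inv_mem (zpow_mem (MonoidHom.mem_range.mpr ⟨x, rfl⟩) k)

theorem classOf_eq_preimage_orbit (T : Subgroup (MulAut 𝔻)) {x : 𝔻} (hx : x ^ p ≠ 1) :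
    classOf T x = QuotientGroup.mk ⁻¹' orbit T (x : 𝔻 ⧸ (powMonoidHom p : 𝔻 →* 𝔻).range) := by
  ext z
  rw [Set.mem_preimage, mem_orbit_symm, mem_orbit_iff]
  simp only [Quotient.smul_mk, mk_eq_mk_iff_exists_zpow hx, Subtype.exists, Subgroup.mk_smul,
    MulAut.smul_def, exists_prop]
  rfl

theorem ncard_classOf_orderOf_eq_prime_add_one (T : Subgroup (MulAut 𝔻)) :
    {s | ∃ x, orderOf x = p ∧ s = classOf T x}.ncard + 1 =
      (Set.range (orbit T : torsionBy T 𝔻 p → Set (torsionBy T 𝔻 p))).ncard := by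
  set one : torsionBy T 𝔻 p := ⟨1, one_pow p⟩
  have hsplit := ncard_range_orbit_eq_add (G := T) (S := {one}) fun t y hy => by
    rw [Set.mem_singleton_iff] at hy ⊢
    rw [hy]
    exact Subtype.ext (smul_one t)
  have hclasses : {s | ∃ x, orderOf x = p ∧ s = classOf T x} =
      Set.image Subtype.val '' (orbit T '' {one}ᶜ) := by
    ext s
    constructor
    · rintro ⟨x, hx, rfl⟩
      obtain ⟨hxp, hx1⟩ := orderOf_eq_prime_iff.mp hx
      refine ⟨orbit T ⟨x, hxp⟩, ⟨⟨x, hxp⟩, fun h => hx1 (congrArg Subtype.val h), rfl⟩, ?_⟩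
      rw [SubMulAction.val_image_orbit, classOf_eq_orbit T hxp]
    · rintro ⟨_, ⟨y, hy, rfl⟩, rfl⟩
      refine ⟨y, orderOf_eq_prime_iff.mpr ⟨y.2, fun h => hy (Subtype.ext h)⟩, ?_⟩
      rw [SubMulAction.val_image_orbit, classOf_eq_orbit T y.2]
  rw [hsplit, hclasses,
    Set.ncard_image_of_injective _ (Set.image_injective.mpr Subtype.val_injective),
    Set.image_singleton, Set.ncard_singleton, add_comm]

theorem ncard_classOf_orderOf_eq_prime_sq_add_two_le (T : Subgroup (MulAut 𝔻)) :
    {s | ∃ x, orderOf x = p ^ 2 ∧ s = classOf T x}.ncard + 2 ≤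
      (Set.range (orbit T : 𝔻 ⧸ (powMonoidHom p : 𝔻 →* 𝔻).range → Set _)).ncard := by
  set V := (powMonoidHom p : 𝔻 →* 𝔻).range
  set S : Set (𝔻 ⧸ V) := QuotientGroup.mk '' {x | x ^ p = 1}
  have hmem : ∀ x : 𝔻, (x : 𝔻 ⧸ V) ∈ S ↔ x ^ p = 1 := by
    refine fun x => ⟨?_, fun hx => ⟨x, hx, rfl⟩⟩
    rintro ⟨y, hy : y ^ p = 1, hyx⟩
    obtain ⟨z, hz⟩ := QuotientGroup.eq.mp hyx
    calc x ^ p = (y * (y⁻¹ * x)) ^ p := by rw [mul_inv_cancel_left]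
      _ = 1 := by
        rw [← hz, mul_pow, hy, one_mul, powMonoidHom_apply, ← pow_mul, ← sq, pow_prime_sq_eq_one]
  have hS : ∀ t : T, ∀ q ∈ S, t • q ∈ S := by
    rintro t _ ⟨x, hx, rfl⟩
    exact ⟨t • x, show (t • x) ^ p = 1 by rw [← smul_pow', hx, smul_one],
      (Quotient.smul_mk V t x).symm⟩
  have hclasses : {s | ∃ x, orderOf x = p ^ 2 ∧ s = classOf T x} =
      Set.preimage QuotientGroup.mk '' (orbit T '' Sᶜ) := by
    ext s
    constructor
    · rintro ⟨x, hx, rfl⟩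
      have hx' := (orderOf_eq_prime_sq_iff x).mp hx
      exact ⟨orbit T (x : 𝔻 ⧸ V), ⟨x, (hmem x).not.mpr hx', rfl⟩,
        (classOf_eq_preimage_orbit T hx').symm⟩
    · rintro ⟨_, ⟨q, hq, rfl⟩, rfl⟩
      obtain ⟨x, rfl⟩ := QuotientGroup.mk_surjective q
      have hx : x ^ p ≠ 1 := fun h => hq ((hmem x).mpr h)
      exact ⟨x, (orderOf_eq_prime_sq_iff x).mpr hx, (classOf_eq_preimage_orbit T hx).symm⟩
  have htwo : 2 ≤ (orbit T '' S).ncard := by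
    set ω : 𝔻 := .ofAdd (0, 1, 0)
    have hω : ω ^ p = 1 := by
      rw [pow_prime_eq, toAdd_ofAdd, smul_zero]
      rfl
    have hne : orbit T (ω : 𝔻 ⧸ V) ≠ orbit T 1 := by
      intro h
      obtain ⟨t, ht⟩ := mem_orbit_iff.mp (h ▸ mem_orbit_self (ω : 𝔻 ⧸ V))
      rw [← QuotientGroup.mk_one, Quotient.smul_mk, smul_one, eq_comm, QuotientGroup.mk_one,
        QuotientGroup.eq_one_iff] at ht
      exact ofAdd_zero_one_zero_notMem_range ht
    exact (Set.one_lt_ncard (Set.toFinite _)).mpr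
      ⟨_, ⟨ω, ⟨ω, hω, rfl⟩, rfl⟩, _, ⟨1, ⟨1, one_pow p, rfl⟩, rfl⟩, hne⟩
  rw [ncard_range_orbit_eq_add hS, hclasses,
    Set.ncard_image_of_injective _ (Set.preimage_injective.mpr QuotientGroup.mk_surjective)]
  omega

end ZModSqProd

open ZModSqProd

theorem stmt_4 (p : ℕ) (hp : p.Prime)
    (T : Subgroup (MulAut (Multiplicative (ZMod (p ^ 2) × ZMod p × ZMod p))))
    (hT : (Nat.card T).Coprime p) :
    Set.ncard {s : Set (Multiplicative (ZMod (p ^ 2) × ZMod p × ZMod p)) |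
        ∃ x, orderOf x = p ∧
          s = {z | ∃ t ∈ T, ∃ k : ℤ, t z = x ^ ((1 : ℤ) + k * p)}} >
    Set.ncard {s : Set (Multiplicative (ZMod (p ^ 2) × ZMod p × ZMod p)) |
        ∃ x, orderOf x = p ^ 2 ∧
          s = {z | ∃ t ∈ T, ∃ k : ℤ, t z = x ^ ((1 : ℤ) + k * p)}} := by
  have := Fact.mk hp
  have h1 := ncard_classOf_orderOf_eq_prime_add_one T
  have h2 := ncard_classOf_orderOf_eq_prime_sq_add_two_le T
  have h := ncard_range_orbit_torsionBy_eq (card_coprime_of_coprime hT) p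
  unfold classOf at h1 h2
  omega
end

section
/- Let e ≥ 3 and let ζ ∈ ℂ be a primitive 2^e-th root of unity. Then ζ + ζ^{-1} does not lie in the cyclotomic field ℚ(ζ_{2^{e-1}}), and ζ - ζ^{-1} does not lie in ℚ(ζ_{2^{e-1}}). -/
/-!
Since `(ζ ^ 2) ^ (2 ^ (e - 1)) = 1`, the square `ζ ^ 2` is a power of `ζ'`. Because `ζ ^ 4 ≠ 1`,
`ζ = (ζ ^ 2 + 1) / (ζ + ζ⁻¹) = (ζ ^ 2 - 1) / (ζ - ζ⁻¹)`, so either element lying in `ℚ⟮ζ'⟯` would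
put `ζ` there. That is impossible by degrees: `φ(2 ^ e) = 2 φ(2 ^ (e - 1))`.
-/

open IntermediateField

section Field

variable {E S : Type*} [Field E] [SetLike S E] [SubfieldClass S E] {K : S} {x : E}

theorem mem_of_sq_mem_of_add_inv_mem (hsq : x ^ 2 ∈ K) (hadd : x + x⁻¹ ∈ K)
    (hx : x ^ 2 + 1 ≠ 0) : x ∈ K := by
  rcases eq_or_ne x 0 with rfl | hx0
  · exact zero_mem K
  have hx_eq : x = (x ^ 2 + 1) / (x + x⁻¹) := by field_simp
  exact hx_eq ▸ div_mem (add_mem hsq (one_mem K)) hadd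

theorem mem_of_sq_mem_of_sub_inv_mem (hsq : x ^ 2 ∈ K) (hsub : x - x⁻¹ ∈ K)
    (hx : x ^ 2 - 1 ≠ 0) : x ∈ K := by
  rcases eq_or_ne x 0 with rfl | hx0
  · exact zero_mem K
  have hx_eq : x = (x ^ 2 - 1) / (x - x⁻¹) := by field_simp
  exact hx_eq ▸ div_mem (sub_mem hsq (one_mem K)) hsub

end Field

namespace IsPrimitiveRoot

variable {L : Type*} [Field L] [CharZero L]

theorem finrank_adjoin_rat {n : ℕ} {x : L} (hx : IsPrimitiveRoot x n) (hn : 0 < n) :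
    Module.finrank ℚ ℚ⟮x⟯ = n.totient := by
  rw [adjoin.finrank (hx.isIntegral hn).tower_top, ← Polynomial.cyclotomic_eq_minpoly_rat hx hn,
    Polynomial.natDegree_cyclotomic]

theorem notMem_adjoin_rat_of_totient_lt {m n : ℕ} {x y : L} (hx : IsPrimitiveRoot x n)
    (hy : IsPrimitiveRoot y m) (hn : 0 < n) (hm : 0 < m) (hlt : m.totient < n.totient) :
    x ∉ ℚ⟮y⟯ := by
  intro hmem
  have : FiniteDimensional ℚ ℚ⟮y⟯ := adjoin.finiteDimensional (hy.isIntegral hm).tower_top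
  have hle := finrank_le_of_le_right ((adjoin_simple_le_iff (F := ℚ)).mpr hmem)
  rw [hx.finrank_adjoin_rat hn, hy.finrank_adjoin_rat hm] at hle
  omega

end IsPrimitiveRoot

theorem stmt_10 (e : ℕ) (he : 3 ≤ e) (ζ ζ' : ℂ)
    (hζ : IsPrimitiveRoot ζ (2 ^ e)) (hζ' : IsPrimitiveRoot ζ' (2 ^ (e - 1))) :
    ζ + ζ⁻¹ ∉ ℚ⟮ζ'⟯ ∧ ζ - ζ⁻¹ ∉ ℚ⟮ζ'⟯ := by
  have hpow : 2 ^ e = 2 * 2 ^ (e - 1) := by rw [← pow_succ']; congr 1; omega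
  have hsq : ζ ^ 2 ∈ ℚ⟮ζ'⟯ := by
    obtain ⟨i, -, hi⟩ := hζ'.eq_pow_of_pow_eq_one (ξ := ζ ^ 2)
      (by rw [← pow_mul, ← hpow, hζ.pow_eq_one])
    exact hi ▸ pow_mem (mem_adjoin_simple_self ℚ ζ') i
  have hfactor : (ζ ^ 2 + 1) * (ζ ^ 2 - 1) ≠ 0 := by
    rw [show (ζ ^ 2 + 1) * (ζ ^ 2 - 1) = ζ ^ 4 - 1 by ring, sub_ne_zero, Ne,
      hζ.pow_eq_one_iff_dvd]
    intro hdvd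
    have := Nat.le_of_dvd (by norm_num) hdvd
    have := Nat.pow_le_pow_right (show 0 < 2 by norm_num) he
    omega
  have htotient : (2 ^ (e - 1)).totient < (2 ^ e).totient := by
    rw [hpow, Nat.totient_mul_of_prime_of_dvd Nat.prime_two (dvd_pow_self 2 (by omega))]
    have := Nat.totient_pos.mpr (show 0 < 2 ^ (e - 1) by positivity)
    omega
  have hnotMem : ζ ∉ ℚ⟮ζ'⟯ :=
    hζ.notMem_adjoin_rat_of_totient_lt hζ' (by positivity) (by positivity) htotient
  exact ⟨fun h ↦ hnotMem (mem_of_sq_mem_of_add_inv_mem hsq h (left_ne_zero_of_mul hfactor)),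
    fun h ↦ hnotMem (mem_of_sq_mem_of_sub_inv_mem hsq h (right_ne_zero_of_mul hfactor))⟩
end

section
/- Let F be a field, k = |I_1| + ... + |I_n| where I_1,...,I_n is a partition of {1,...,k}, and A ∈ F^{k×k}. Then det A = Σ_J sgn(σ_J) · det(A_{J_1 I_1}) ⋯ det(A_{J_n I_n}), where the sum runs over all partitions J = (J_1,...,J_n) of {1,...,k} with |J_i| = |I_i| for all i, A_{J_i I_i} is the submatrix with rows indexed by J_i and columns by I_i, and σ_J is the unique permutation of {1,...,k} sending J_i to I_i order-preservingly for each i. -/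
/-!
Let `A_J` be `A` with every entry outside `⋃ᵢ Jᵢ × Iᵢ` replaced by zero. A permutation `τ`
survives in the Leibniz expansion of `det A_J` exactly when `τ(Iᵢ) = Jᵢ` for all `i`, and every
`τ` does so for exactly one `J`; hence `det A = ∑_J det A_J`. Permuting the rows of `A_J` by
`σ_J⁻¹` produces a matrix that is block diagonal for the partition `I`, and since `σ_J` is
increasing on each `Jᵢ`, its `i`-th diagonal block is `A_{Jᵢ Iᵢ}` with rows and columns listed
in increasing order.
-/

open Finset Equiv Function

namespace Matrix

def blockRestrict {ι α β R : Type*} [Fintype ι] [Zero R] [DecidableEq α] [DecidableEq β]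
    (A : Matrix α β R) (J : ι → Finset α) (I : ι → Finset β) : Matrix α β R :=
  of fun y x => if ∃ i, y ∈ J i ∧ x ∈ I i then A y x else 0

theorem det_eq_prod_det_toSquareBlock {ι α R : Type*} [Fintype ι] [DecidableEq ι] [Fintype α]
    [DecidableEq α] [CommRing R] {M : Matrix α α R} (b : α → ι)
    (hM : ∀ y x, b y ≠ b x → M y x = 0) :
    M.det = ∏ i, (M.toSquareBlock b i).det :=
  -- a block-diagonal matrix is block triangular for any order on the blocks
  letI : LinearOrder ι := LinearOrder.lift' _ (Fintype.equivFin ι).injective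
  BlockTriangular.det_fintype fun y x h => hM y x h.ne'

end Matrix

open Matrix

theorem StrictMonoOn.apply_orderIsoOfFin {α β : Type*} [LinearOrder α] [LinearOrder β]
    {f : α → β} {s : Finset α} {t : Finset β} {c : ℕ} (hmaps : ∀ x ∈ s, f x ∈ t)
    (hmono : StrictMonoOn f s) (hs : #s = c) (ht : #t = c) (a : Fin c) :
    f (s.orderIsoOfFin hs a) = t.orderIsoOfFin ht a := by
  have hfs : ∀ a, f (s.orderEmbOfFin hs a) ∈ t := fun a => hmaps _ (orderEmbOfFin_mem _ _ _)
  have hsm : StrictMono fun a => f (s.orderEmbOfFin hs a) := fun a b hab =>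
    hmono (orderEmbOfFin_mem _ _ _) (orderEmbOfFin_mem _ _ _) ((s.orderEmbOfFin hs).strictMono hab)
  exact congrFun (orderEmbOfFin_unique ht hfs hsm) a

open Classical in
noncomputable def orderedPartitions {ι α : Type*} [Fintype ι] [DecidableEq ι] [Fintype α]
    (c : ι → ℕ) : Finset (ι → Finset α) :=
  {J | (∀ i, #(J i) = c i) ∧ Pairwise (Disjoint on J) ∧ ∀ x, ∃ i, x ∈ J i}

section Partition

variable {ι α : Type*} {I : ι → Finset α}

theorem mem_orderedPartitions [Fintype ι] [DecidableEq ι] [Fintype α] {c : ι → ℕ}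
    {J : ι → Finset α} :
    J ∈ orderedPartitions c ↔
      (∀ i, #(J i) = c i) ∧ Pairwise (Disjoint on J) ∧ ∀ x, ∃ i, x ∈ J i := by
  simp [orderedPartitions]

theorem image_mem_orderedPartitions [Fintype ι] [DecidableEq ι] [Fintype α] [DecidableEq α]
    (hdisj : Pairwise (Disjoint on I)) (hcover : ∀ x, ∃ i, x ∈ I i) (τ : Perm α) :
    (fun i => (I i).image τ) ∈ orderedPartitions fun i => #(I i) := by
  refine mem_orderedPartitions.2 ⟨fun i => card_image_of_injective _ τ.injective,
    fun i j hij => (disjoint_image τ.injective).2 (hdisj hij), fun x => ?_⟩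
  obtain ⟨i, hi⟩ := hcover (τ.symm x)
  exact ⟨i, mem_image.2 ⟨_, hi, τ.apply_symm_apply x⟩⟩

theorem forall_exists_mem_iff_image_eq [DecidableEq α] (hdisj : Pairwise (Disjoint on I))
    (hcover : ∀ x, ∃ i, x ∈ I i) {J : ι → Finset α} (hJ : ∀ i, #(J i) = #(I i))
    (τ : Perm α) :
    (∀ x, ∃ i, τ x ∈ J i ∧ x ∈ I i) ↔ (fun i => (I i).image τ) = J := by
  constructor
  · intro h
    funext i
    refine eq_of_subset_of_card_le (fun y hy => ?_) ?_
    · obtain ⟨x, hx, rfl⟩ := mem_image.1 hy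
      obtain ⟨j, hτx, hxj⟩ := h x
      obtain rfl : j = i := by_contra fun hji => disjoint_left.1 (hdisj hji) hxj hx
      exact hτx
    · rw [hJ, card_image_of_injective _ τ.injective]
  · rintro rfl x
    obtain ⟨i, hi⟩ := hcover x
    exact ⟨i, mem_image_of_mem τ hi, hi⟩

noncomputable def blockIndex (hcover : ∀ x, ∃ i, x ∈ I i) (x : α) : ι := (hcover x).choose

theorem mem_blockIndex (hcover : ∀ x, ∃ i, x ∈ I i) (x : α) :
    x ∈ I (blockIndex hcover x) :=
  (hcover x).choose_spec

theorem blockIndex_eq_iff (hdisj : Pairwise (Disjoint on I)) (hcover : ∀ x, ∃ i, x ∈ I i)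
    {x : α} {i : ι} : blockIndex hcover x = i ↔ x ∈ I i :=
  ⟨fun h => h ▸ mem_blockIndex hcover x, fun hx =>
    by_contra fun h => disjoint_left.1 (hdisj h) (mem_blockIndex hcover x) hx⟩

end Partition

section Determinant

variable {ι α R : Type*} [Fintype ι] [DecidableEq ι] [Fintype α] [CommRing R]
  {I : ι → Finset α}

theorem det_eq_sum_det_blockRestrict [DecidableEq α] (hdisj : Pairwise (Disjoint on I))
    (hcover : ∀ x, ∃ i, x ∈ I i) (A : Matrix α α R) :
    A.det = ∑ J ∈ orderedPartitions fun i => #(I i), (A.blockRestrict J I).det := by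
  have hprod (J : ι → Finset α) (τ : Perm α) : ∏ x, A.blockRestrict J I (τ x) x =
      if ∀ x, ∃ i, τ x ∈ J i ∧ x ∈ I i then ∏ x, A (τ x) x else 0 :=
    Fintype.prod_ite_zero
  simp_rw [det_apply', hprod, mul_ite, mul_zero]
  rw [sum_comm]
  refine sum_congr rfl fun τ _ => ?_
  rw [sum_congr rfl fun J hJ => if_congr (forall_exists_mem_iff_image_eq hdisj hcover
    (mem_orderedPartitions.1 hJ).1 τ) rfl rfl, sum_ite_eq,
    if_pos (image_mem_orderedPartitions hdisj hcover τ)]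

theorem det_blockRestrict [LinearOrder α] (hdisj : Pairwise (Disjoint on I))
    (hcover : ∀ x, ∃ i, x ∈ I i) (A : Matrix α α R) {J : ι → Finset α}
    (hJ : ∀ i, #(J i) = #(I i)) (σ : Perm α) (hmaps : ∀ i, ∀ x ∈ J i, σ x ∈ I i)
    (hmono : ∀ i, StrictMonoOn σ (J i)) :
    (A.blockRestrict J I).det = ((Perm.sign σ : ℤ) : R) * ∏ i,
      (A.submatrix (fun a => ((J i).orderIsoOfFin (hJ i) a : α))
        (fun a => ((I i).orderIsoOfFin rfl a : α))).det := by
  set B := (A.blockRestrict J I).submatrix σ.symm id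
  have hB : (A.blockRestrict J I).det = ((Perm.sign σ : ℤ) : R) * B.det := by
    rw [det_permute, Perm.sign_symm, ← mul_assoc, ← Int.cast_mul, ← Units.val_mul,
      Int.units_mul_self, Units.val_one, Int.cast_one, one_mul]
  have hB_blockDiagonal (y x : α) (hyx : blockIndex hcover y ≠ blockIndex hcover x) :
      B y x = 0 := by
    refine if_neg fun ⟨i, hy, hx⟩ => hyx ?_
    have hy' : y ∈ I i := by simpa using hmaps i _ hy
    rw [(blockIndex_eq_iff hdisj hcover).2 hy']
    exact ((blockIndex_eq_iff hdisj hcover).2 hx).symm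
  have hsymm (i : ι) (a : Fin #(I i)) :
      σ.symm ((I i).orderIsoOfFin rfl a) = (J i).orderIsoOfFin (hJ i) a :=
    σ.symm_apply_eq.2 ((hmono i).apply_orderIsoOfFin (hmaps i) (hJ i) rfl a).symm
  let e (i : ι) : Fin #(I i) ≃ {x // blockIndex hcover x = i} :=
    ((I i).orderIsoOfFin rfl).toEquiv.trans
      (subtypeEquivRight fun _ => (blockIndex_eq_iff hdisj hcover).symm)
  rw [hB, det_eq_prod_det_toSquareBlock _ hB_blockDiagonal]
  refine congrArg _ (prod_congr rfl fun i _ => ?_)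
  rw [← det_submatrix_equiv_self (e i)]
  congr 1
  ext a a'
  change A.blockRestrict J I (σ.symm ((I i).orderIsoOfFin rfl a)) ((I i).orderIsoOfFin rfl a') = _
  rw [hsymm]
  exact if_pos ⟨i, coe_mem _, coe_mem _⟩

end Determinant

theorem stmt_12 (F : Type*) [Field F] (k n : ℕ)
    (I : Fin n → Finset (Fin k))
    (hIdisj : ∀ i j, i ≠ j → Disjoint (I i) (I j))
    (hIcover : Finset.univ.biUnion I = (Finset.univ : Finset (Fin k)))
    (A : Matrix (Fin k) (Fin k) F)
    (P : Finset (Fin n → Finset (Fin k)))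
    (hP : P = Finset.univ.filter (fun J : Fin n → Finset (Fin k) =>
      (∀ i, (J i).card = (I i).card) ∧
      (∀ i j, i ≠ j → J i ∩ J j = ∅) ∧
      Finset.univ.biUnion J = (Finset.univ : Finset (Fin k))))
    (hPcard : ∀ J ∈ P, ∀ i, (J i).card = (I i).card)
    (σ : (Fin n → Finset (Fin k)) → Equiv.Perm (Fin k))
    (hσmaps : ∀ J ∈ P, ∀ i, ∀ j ∈ J i, σ J j ∈ I i)
    (hσmono : ∀ J ∈ P, ∀ i, StrictMonoOn (σ J) ↑(J i)) :
    A.det = ∑ J ∈ P.attach,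
      ((Equiv.Perm.sign (σ J.1) : ℤ) : F) *
        ∏ i : Fin n,
          (A.submatrix
            (fun a : Fin ((I i).card) =>
              ((J.1 i).orderIsoOfFin (hPcard J.1 J.2 i) a : Fin k))
            (fun a : Fin ((I i).card) =>
              ((I i).orderIsoOfFin rfl a : Fin k))).det := by
  have hdisj : Pairwise (Disjoint on I) := fun i j hij => hIdisj i j hij
  have hcover (x : Fin k) : ∃ i, x ∈ I i := by
    simpa using (hIcover.symm ▸ mem_univ x : x ∈ univ.biUnion I)
  have hP_eq : P = orderedPartitions fun i => #(I i) := by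
    ext J
    simp [hP, mem_orderedPartitions, Pairwise, disjoint_iff_inter_eq_empty, eq_univ_iff_forall]
  rw [det_eq_sum_det_blockRestrict hdisj hcover A, ← hP_eq, ← sum_attach P]
  exact sum_congr rfl fun J _ => det_blockRestrict hdisj hcover A (hPcard J.1 J.2) (σ J.1)
    (hσmaps J.1 J.2) (hσmono J.1 J.2)
end

section
/- Let V be a finite-dimensional vector space over a field F, and suppose V = V_1 ⊕ ... ⊕ V_n is a direct sum of subspaces. Let v_1,...,v_k be any basis of V (k = dim V). Then there exists a partition {1,...,k} = J_1 ∪ ... ∪ J_n with |J_i| = dim V_i such that for every i, the images of (v_j)_{j ∈ J_i} under the projection V → V_i (along the direct sum decomposition) form a basis of V_i. -/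
/-!
Write each basis vector as the sum of its components, `v j = ∑ i, π i (v j)`, and expand
`det_v (v 1, …, v k) = 1` multilinearly: some term
`det_v (π (f 1) (v 1), …, π (f k) (v k))` is nonzero, so those vectors are linearly independent.
Grouping them by the fibres `J i` of `f` gives an independent family in each `V i`, so
`#J i ≤ dim V i`; as both sides sum to `dim V`, every inequality is an equality and each family
is a basis.
-/

open Finset

theorem Module.Basis.exists_linearIndependent_of_sum_eq {ι κ R M : Type*} [CommRing R]
    [IsDomain R] [AddCommGroup M] [Module R M] [Fintype ι] [Fintype κ] (v : Module.Basis ι R M)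
    (u : ι → κ → M) (hu : ∀ j, ∑ c, u j c = v j) :
    ∃ f : ι → κ, LinearIndependent R (fun j => u j (f j)) := by
  classical
  have hdet : v.det (fun j => ∑ c, u j c) ≠ 0 := by
    simp only [hu, v.det_self, ne_eq, one_ne_zero, not_false_eq_true]
  rw [← AlternatingMap.coe_multilinearMap, MultilinearMap.map_sum] at hdet
  obtain ⟨f, -, hf⟩ := Finset.exists_ne_zero_of_sum_ne_zero hdet
  exact ⟨f, by_contra fun h => hf (v.det.map_linearDependent _ h)⟩

theorem DirectSum.IsInternal.sum_ofBijective_coeLinearMap_symm {κ R M : Type*} [Semiring R]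
    [AddCommMonoid M] [Module R M] [Fintype κ] [DecidableEq κ] {W : κ → Submodule R M}
    (hW : DirectSum.IsInternal W) (x : M) :
    ∑ c, ((LinearEquiv.ofBijective (DirectSum.coeLinearMap W) hW).symm x c : M) = x := by
  set y := (LinearEquiv.ofBijective (DirectSum.coeLinearMap W) hW).symm x
  calc ∑ c, (y c : M) = DirectSum.coeLinearMap W y := by
        conv_rhs => rw [← DirectSum.sum_univ_of y, map_sum]
        simp only [DirectSum.coeLinearMap_of]
    _ = x := (LinearEquiv.ofBijective (DirectSum.coeLinearMap W) hW).apply_symm_apply x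

theorem DirectSum.IsInternal.sum_finrank_eq {κ F V : Type*} [Field F] [AddCommGroup V]
    [Module F V] [FiniteDimensional F V] [Fintype κ] [DecidableEq κ] {W : κ → Submodule F V}
    (hW : DirectSum.IsInternal W) :
    ∑ c, Module.finrank F (W c) = Module.finrank F V := by
  rw [← Module.finrank_directSum,
    (LinearEquiv.ofBijective (DirectSum.coeLinearMap W) hW).finrank_eq]

theorem DirectSum.IsInternal.card_eq_finrank_of_linearIndependent {κ F V : Type*} [Field F]
    [AddCommGroup V] [Module F V] [FiniteDimensional F V] [Fintype κ] [DecidableEq κ]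
    {W : κ → Submodule F V} (hW : DirectSum.IsInternal W) {α : κ → Type*}
    [∀ c, Fintype (α c)] {x : ∀ c, α c → W c} (hx : ∀ c, LinearIndependent F (x c))
    (hcard : ∑ c, Fintype.card (α c) = Module.finrank F V) (c : κ) :
    Fintype.card (α c) = Module.finrank F (W c) := by
  have hle : ∀ c ∈ univ, Fintype.card (α c) ≤ Module.finrank F (W c) :=
    fun c _ => (hx c).fintype_card_le_finrank
  exact (Finset.sum_eq_sum_iff_of_le hle).mp (hcard.trans hW.sum_finrank_eq.symm) c (mem_univ c)

theorem LinearIndependent.of_comp_fiber {ι κ R M : Type*} [Semiring R] [AddCommMonoid M]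
    [Module R M] {W : κ → Submodule R M} {x : ι → ∀ c, W c} {f : ι → κ}
    (hx : LinearIndependent R (fun j => (x j (f j) : M))) {c : κ} {s : Finset ι}
    (hs : ∀ j ∈ s, f j = c) : LinearIndependent R (fun j : s => x j c) := by
  apply LinearIndependent.of_comp (W c).subtype
  convert hx.comp ((↑) : s → ι) Subtype.val_injective using 1
  funext ⟨j, hj⟩
  obtain rfl := hs j hj
  rfl

theorem stmt_13 (F V : Type*) [Field F] [AddCommGroup V] [Module F V]
    [FiniteDimensional F V] (n k : ℕ) (W : Fin n → Submodule F V)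
    (hW : DirectSum.IsInternal W) (v : Module.Basis (Fin k) F V) :
    ∃ J : Fin n → Finset (Fin k),
      (∀ i j, i ≠ j → Disjoint (J i) (J j)) ∧
      Finset.univ.biUnion J = (Finset.univ : Finset (Fin k)) ∧
      ∀ i, (J i).card = Module.finrank F (W i) ∧
        LinearIndependent F (fun j : (J i) =>
          ((LinearEquiv.ofBijective (DirectSum.coeLinearMap W) hW).symm (v j)) i) ∧
        Submodule.span F (Set.range (fun j : (J i) =>
          ((LinearEquiv.ofBijective (DirectSum.coeLinearMap W) hW).symm (v j)) i)) = ⊤ := by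
  set E := LinearEquiv.ofBijective (DirectSum.coeLinearMap W) hW
  obtain ⟨f, hf⟩ := v.exists_linearIndependent_of_sum_eq (fun j c => (E.symm (v j) c : V))
    fun j => hW.sum_ofBijective_coeLinearMap_symm (v j)
  set J : Fin n → Finset (Fin k) := fun i => {j | f j = i}
  have hind : ∀ i, LinearIndependent F (fun j : J i => E.symm (v j) i) := fun i =>
    hf.of_comp_fiber fun j hj => (mem_filter.mp hj).2
  have hcard := hW.card_eq_finrank_of_linearIndependent hind <| by
    calc ∑ i, Fintype.card (J i) = ∑ i, #(J i) := by simp only [Fintype.card_coe]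
      _ = #(univ : Finset (Fin k)) := (card_eq_sum_card_fiberwise fun j _ => mem_univ (f j)).symm
      _ = Module.finrank F V := by rw [card_univ, Module.finrank_eq_card_basis v]
  refine ⟨J, fun i i' hii' => disjoint_filter.mpr fun j _ hi hi' => hii' (hi ▸ hi'),
    biUnion_filter_eq_of_maps_to fun j _ => mem_univ (f j), fun i => ?_⟩
  rw [← Fintype.card_coe]
  exact ⟨hcard i, hind i, (hind i).span_eq_top_of_card_eq_finrank' (hcard i)⟩
end
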